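/- Let m > 3 be an integer and G a finite simple graph with no isolated vertices. Then ε_R(F_1^m(G)) = ε_R(G) + ((m−1)/m)·ε_R(G) = ((2m−1)/m)·ε_R(G), where ε_R denotes Randić energy. -/

import Mathlib

open Matrix

noncomputable section

/-- The multiplicity of `μ` as an eigenvalue of a real matrix `M`:
the dimension of the kernel of `M - μ·Id`. -/
def eigMult {n : Type} [Fintype n] [DecidableEq n] (M : Matrix n n ℝ) (μ : ℝ) : ℕ :=
  Module.finrank ℝ (LinearMap.ker (Matrix.toLin' (M - μ • (1 : Matrix n n ℝ))))

/-- The energy of a real symmetric matrix: the sum of the absolute values of its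
eigenvalues, counted with multiplicity. -/
def matEnergy {n : Type} [Fintype n] [DecidableEq n] (M : Matrix n n ℝ) : ℝ :=
  if h : M.IsHermitian then ∑ i, |h.eigenvalues i| else 0

/-- The incidence matrix of a graph, rows indexed by vertices, columns by edges. -/
def incid {V : Type} [DecidableEq V] (G : SimpleGraph V) : Matrix V G.edgeSet ℝ :=
  fun v e => if v ∈ (e : Sym2 V) then 1 else 0

/-- Adjacency matrix of the subdivision graph `S(G)`. -/
def AS {V : Type} [DecidableEq V] (G : SimpleGraph V) :
    Matrix (V ⊕ G.edgeSet) (V ⊕ G.edgeSet) ℝ :=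
  Matrix.fromBlocks 0 (incid G) (incid G)ᵀ 0

/-- Adjacency matrix of `S(G)_k`. -/
def ASk {V : Type} [DecidableEq V] (G : SimpleGraph V) (k : ℕ) :
    Matrix (V ⊕ (Fin k × G.edgeSet)) (V ⊕ (Fin k × G.edgeSet)) ℝ :=
  fun x y => match x, y with
    | Sum.inl v, Sum.inr (_, e) => if v ∈ (e : Sym2 V) then 1 else 0
    | Sum.inr (_, e), Sum.inl v => if v ∈ (e : Sym2 V) then 1 else 0
    | _, _ => 0

/-- Adjacency matrix of `S(G)_t^n`. -/
def AStn {V : Type} [DecidableEq V] (G : SimpleGraph V) (n t : ℕ) :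
    Matrix ((Fin (n + 1) × V) ⊕ (Fin (t + 1) × G.edgeSet))
           ((Fin (n + 1) × V) ⊕ (Fin (t + 1) × G.edgeSet)) ℝ :=
  fun x y => match x, y with
    | Sum.inl (_, v), Sum.inr (_, e) => if v ∈ (e : Sym2 V) then 1 else 0
    | Sum.inr (_, e), Sum.inl (_, v) => if v ∈ (e : Sym2 V) then 1 else 0
    | _, _ => 0

/-- The subdivision graph `S(G)` as a simple graph. -/
def SGGraph {V : Type} (G : SimpleGraph V) : SimpleGraph (V ⊕ G.edgeSet) where
  Adj x y :=
    (∃ (v : V) (e : G.edgeSet), x = Sum.inl v ∧ y = Sum.inr e ∧ v ∈ (e : Sym2 V)) ∨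
    (∃ (v : V) (e : G.edgeSet), x = Sum.inr e ∧ y = Sum.inl v ∧ v ∈ (e : Sym2 V))
  symm := by
    constructor
    rintro x y (⟨v, e, rfl, rfl, h⟩ | ⟨v, e, rfl, rfl, h⟩)
    · exact Or.inr ⟨v, e, rfl, rfl, h⟩
    · exact Or.inl ⟨v, e, rfl, rfl, h⟩
  loopless := by
    constructor
    rintro x (⟨v, e, h1, h2, _⟩ | ⟨v, e, h1, h2, _⟩) <;> subst h1 <;> simp_all

/-- The graph `S(G)_k`. -/
def SGkGraph {V : Type} (G : SimpleGraph V) (k : ℕ) :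
    SimpleGraph (V ⊕ (Fin k × G.edgeSet)) where
  Adj x y :=
    (∃ (v : V) (ie : Fin k × G.edgeSet),
        x = Sum.inl v ∧ y = Sum.inr ie ∧ v ∈ (ie.2 : Sym2 V)) ∨
    (∃ (v : V) (ie : Fin k × G.edgeSet),
        x = Sum.inr ie ∧ y = Sum.inl v ∧ v ∈ (ie.2 : Sym2 V))
  symm := by
    constructor
    rintro x y (⟨v, ie, rfl, rfl, h⟩ | ⟨v, ie, rfl, rfl, h⟩)
    · exact Or.inr ⟨v, ie, rfl, rfl, h⟩
    · exact Or.inl ⟨v, ie, rfl, rfl, h⟩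
  loopless := by
    constructor
    rintro x (⟨v, ie, h1, h2, _⟩ | ⟨v, ie, h1, h2, _⟩) <;> subst h1 <;> simp_all

/-- The graph `S(G)_t^n`. -/
def SGtnGraph {V : Type} (G : SimpleGraph V) (n t : ℕ) :
    SimpleGraph ((Fin (n + 1) × V) ⊕ (Fin (t + 1) × G.edgeSet)) where
  Adj x y :=
    (∃ (iv : Fin (n + 1) × V) (je : Fin (t + 1) × G.edgeSet),
        x = Sum.inl iv ∧ y = Sum.inr je ∧ iv.2 ∈ (je.2 : Sym2 V)) ∨
    (∃ (iv : Fin (n + 1) × V) (je : Fin (t + 1) × G.edgeSet),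
        x = Sum.inr je ∧ y = Sum.inl iv ∧ iv.2 ∈ (je.2 : Sym2 V))
  symm := by
    constructor
    rintro x y (⟨iv, je, rfl, rfl, h⟩ | ⟨iv, je, rfl, rfl, h⟩)
    · exact Or.inr ⟨iv, je, rfl, rfl, h⟩
    · exact Or.inl ⟨iv, je, rfl, rfl, h⟩
  loopless := by
    constructor
    rintro x (⟨iv, je, h1, h2, _⟩ | ⟨iv, je, h1, h2, _⟩) <;> subst h1 <;> simp_all

open scoped Classical in
/-- The Randić matrix of a graph: entry `1/√(deg u · deg v)` when `u ~ v`, else `0`. -/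
def randicMatrix {W : Type} (H : SimpleGraph W) : Matrix W W ℝ :=
  fun u v =>
    if H.Adj u v then
      1 / Real.sqrt ((Nat.card (H.neighborSet u) * Nat.card (H.neighborSet v) : ℕ) : ℝ)
    else 0

/-- `H` has no isolated vertices. -/
def NoIsolated {W : Type} (H : SimpleGraph W) : Prop := ∀ v, ∃ u, H.Adj v u

/-- The matrix `B` used in the construction of `F₁^m(G)`: all entries `1`
except `B(1,1) = 0` and `B(i, m+1-i) = 0` for `2 ≤ i ≤ m-1` (1-based indexing). -/
def Bmat (m : ℕ) : Matrix (Fin m) (Fin m) ℝ :=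
  fun i j =>
    if (i.val = 0 ∧ j.val = 0) ∨ (i.val ≠ 0 ∧ j.val ≠ 0 ∧ i.val + j.val = m - 1) then 0 else 1

lemma Bmat_symm (m : ℕ) (i j : Fin m) : Bmat m i j = Bmat m j i := by
  unfold Bmat
  by_cases h : (i.val = 0 ∧ j.val = 0) ∨ (i.val ≠ 0 ∧ j.val ≠ 0 ∧ i.val + j.val = m - 1)
  · rw [if_pos h, if_pos (by omega)]
  · rw [if_neg h, if_neg (by omega)]

/-- The graph `F₁^m(G)`: `(i,u) ~ (j,v)` iff `B(i,j) = 1` and `u ~ v` in `G`. -/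
def F1Graph {V : Type} (m : ℕ) (G : SimpleGraph V) : SimpleGraph (Fin m × V) where
  Adj x y := Bmat m x.1 y.1 = 1 ∧ G.Adj x.2 y.2
  symm := by
    constructor
    rintro x y ⟨hb, ha⟩
    refine ⟨?_, ha.symm⟩
    rw [Bmat_symm]; exact hb
  loopless := ⟨fun x h => G.irrefl h.2⟩

/-- The matrix `H` used in the construction of `F₂^m(G)`: all entries `1`
except `H(i,i) = 0` for `2 ≤ i ≤ m` (1-based indexing). -/
def HmatF2 (m : ℕ) : Matrix (Fin m) (Fin m) ℝ :=
  fun i j => if i.val = j.val ∧ i.val ≠ 0 then 0 else 1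

lemma HmatF2_symm (m : ℕ) (i j : Fin m) : HmatF2 m i j = HmatF2 m j i := by
  unfold HmatF2
  by_cases h : i.val = j.val ∧ i.val ≠ 0
  · rw [if_pos h, if_pos (by omega)]
  · rw [if_neg h, if_neg (by omega)]

/-- The graph `F₂^m(G)`: `(i,u) ~ (j,v)` iff `H(i,j) = 1` and `u ~ v` in `G`. -/
def F2Graph {V : Type} (m : ℕ) (G : SimpleGraph V) : SimpleGraph (Fin m × V) where
  Adj x y := HmatF2 m x.1 y.1 = 1 ∧ G.Adj x.2 y.2
  symm := by
    constructor
    rintro x y ⟨hb, ha⟩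
    refine ⟨?_, ha.symm⟩
    rw [HmatF2_symm]; exact hb
  loopless := ⟨fun x h => G.irrefl h.2⟩

/-- The tensor (Kronecker) product of simple graphs. -/
def tensorGraph {W U : Type} (H : SimpleGraph W) (G : SimpleGraph U) :
    SimpleGraph (W × U) where
  Adj x y := H.Adj x.1 y.1 ∧ G.Adj x.2 y.2
  symm := ⟨fun _ _ h => ⟨h.1.symm, h.2.symm⟩⟩
  loopless := ⟨fun x h => H.irrefl h.1⟩



section AuxSpectral
open Polynomial


lemma myCharpoly_diagonal {n : Type} [Fintype n] [DecidableEq n] (d : n → ℝ) :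
    (Matrix.diagonal d).charpoly = ∏ i, (X - C (d i)) := by
  unfold Matrix.charpoly
  have h : charmatrix (Matrix.diagonal d) = Matrix.diagonal (fun i => (X : ℝ[X]) - C (d i)) := by
    ext i j
    by_cases h : i = j
    · subst h; simp [charmatrix_apply_eq]
    · simp [charmatrix_apply_ne _ _ _ h, Matrix.diagonal_apply_ne _ h]
  rw [h, Matrix.det_diagonal]

lemma myCharpoly_conj {n : Type} [Fintype n] [DecidableEq n]
    (W A W' : Matrix n n ℝ) (h1 : W * W' = 1) :
    (W * A * W').charpoly = A.charpoly := by
  have h2 : W' * W = 1 := mul_eq_one_comm.mp h1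
  have hd : ∀ (M : Matrix n n ℝ[X]),
      Matrix.diagonal (fun _ : n => (X : ℝ[X])) * M = M * Matrix.diagonal (fun _ => X) := by
    intro M; ext i j
    simp [Matrix.diagonal_mul, Matrix.mul_diagonal, mul_comm]
  have hch : ∀ (M : Matrix n n ℝ), charmatrix M
      = Matrix.diagonal (fun _ : n => (X : ℝ[X])) - M.map C := by
    intro M; ext i j; rw [charmatrix_apply]; simp [Matrix.map_apply]
  have key : charmatrix (W * A * W') = W.map C * charmatrix A * W'.map C := by
    rw [hch, hch]
    have hmap : ∀ (M N : Matrix n n ℝ), (M * N).map (C : ℝ →+* ℝ[X]) = M.map C * N.map C := by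
      intro M N; exact Matrix.map_mul
    rw [Matrix.mul_sub, Matrix.sub_mul, ← hmap, ← hmap]
    congr 1
    rw [← hd (W.map C), Matrix.mul_assoc, ← hmap, h1]
    simp [Matrix.map_one]
  unfold Matrix.charpoly
  rw [key, Matrix.det_mul, Matrix.det_mul]
  have : W.map (C : ℝ →+* ℝ[X]) * W'.map C = 1 := by
    rw [← Matrix.map_mul, h1]; simp [Matrix.map_one]
  have hdet : (W.map (C : ℝ →+* ℝ[X])).det * (W'.map C).det = 1 := by
    rw [← Matrix.det_mul, this, Matrix.det_one]
  ring_nf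
  calc (W.map (C : ℝ →+* ℝ[X])).det * (charmatrix A).det * (W'.map C).det
      = (charmatrix A).det * ((W.map C).det * (W'.map C).det) := by ring
    _ = (charmatrix A).det := by rw [hdet, mul_one]

lemma myCharpoly_isHermitian {n : Type} [Fintype n] [DecidableEq n]
    (M : Matrix n n ℝ) (hM : M.IsHermitian) :
    M.charpoly = ∏ i, (X - C (hM.eigenvalues i)) := by
  have hsp := hM.spectral_theorem
  have h1 : (hM.eigenvectorUnitary : Matrix n n ℝ) * (star hM.eigenvectorUnitary : Matrix n n ℝ) = 1 :=
    (Matrix.mem_unitaryGroup_iff).mp hM.eigenvectorUnitary.2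
  have : M.charpoly = (Matrix.diagonal (RCLike.ofReal ∘ hM.eigenvalues)).charpoly := by
    conv_lhs => rw [hsp]
    exact myCharpoly_conj _ _ _ h1
  rw [this]
  have : (RCLike.ofReal ∘ hM.eigenvalues : n → ℝ) = hM.eigenvalues := by
    funext i; simp [RCLike.ofReal]
  rw [this, myCharpoly_diagonal]

lemma sum_abs_eigenvalues_eq {n κ : Type} [Fintype n] [DecidableEq n] [Fintype κ]
    (M : Matrix n n ℝ) (hM : M.IsHermitian) (f : κ → ℝ)
    (h : M.charpoly = ∏ k, (X - C (f k))) :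
    ∑ i, |hM.eigenvalues i| = ∑ k, |f k| := by
  have h2 := myCharpoly_isHermitian M hM
  have hmeq : Multiset.map hM.eigenvalues Finset.univ.val = Multiset.map f Finset.univ.val := by
    have e1 : (Multiset.map (fun a => (X : ℝ[X]) - C a) (Finset.univ.val.map hM.eigenvalues)).prod
        = (Multiset.map (fun a => (X : ℝ[X]) - C a) (Finset.univ.val.map f)).prod := by
      rw [Multiset.map_map, Multiset.map_map]
      simp only [Function.comp]
      rw [← Finset.prod_eq_multiset_prod, ← Finset.prod_eq_multiset_prod]
      rw [← h2, ← h]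
    have := congrArg Polynomial.roots e1
    rwa [roots_multiset_prod_X_sub_C, roots_multiset_prod_X_sub_C] at this
  calc ∑ i, |hM.eigenvalues i|
      = ((Finset.univ.val.map hM.eigenvalues).map (fun x => |x|)).sum := by
        rw [Multiset.map_map]; rfl
    _ = ((Finset.univ.val.map f).map (fun x => |x|)).sum := by rw [hmeq]
    _ = ∑ k, |f k| := by rw [Multiset.map_map]; rfl


lemma isHermitian_kronecker {n κ : Type} (A : Matrix n n ℝ) (B : Matrix κ κ ℝ)
    (hA : A.IsHermitian) (hB : B.IsHermitian) :
    (Matrix.kroneckerMap (· * ·) A B).IsHermitian := by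
  ext ⟨i, k⟩ ⟨j, l⟩
  simp only [conjTranspose_apply, kroneckerMap_apply, star_mul', star_trivial]
  rw [← hA.apply j i, ← hB.apply l k]
  simp [conjTranspose_apply, mul_comm]

lemma charpoly_kronecker_herm {n κ : Type} [Fintype n] [DecidableEq n] [Fintype κ] [DecidableEq κ]
    (A : Matrix n n ℝ) (B : Matrix κ κ ℝ) (hA : A.IsHermitian) (hB : B.IsHermitian) :
    (Matrix.kroneckerMap (· * ·) A B).charpoly
      = ∏ p : n × κ, (Polynomial.X - Polynomial.C (hA.eigenvalues p.1 * hB.eigenvalues p.2)) := by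
  have hu1 : (hA.eigenvectorUnitary : Matrix n n ℝ) * (star hA.eigenvectorUnitary : Matrix n n ℝ) = 1 :=
    (Matrix.mem_unitaryGroup_iff).mp hA.eigenvectorUnitary.2
  have hu2 : (hB.eigenvectorUnitary : Matrix κ κ ℝ) * (star hB.eigenvectorUnitary : Matrix κ κ ℝ) = 1 :=
    (Matrix.mem_unitaryGroup_iff).mp hB.eigenvectorUnitary.2
  have hofA : (RCLike.ofReal ∘ hA.eigenvalues : n → ℝ) = hA.eigenvalues := by
    funext i; simp [RCLike.ofReal]
  have hofB : (RCLike.ofReal ∘ hB.eigenvalues : κ → ℝ) = hB.eigenvalues := by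
    funext i; simp [RCLike.ofReal]
  have hsp : Matrix.kroneckerMap (· * ·) A B =
      (Matrix.kroneckerMap (· * ·) (hA.eigenvectorUnitary : Matrix n n ℝ) (hB.eigenvectorUnitary : Matrix κ κ ℝ))
      * (Matrix.diagonal (fun p : n × κ => hA.eigenvalues p.1 * hB.eigenvalues p.2))
      * (Matrix.kroneckerMap (· * ·) (star hA.eigenvectorUnitary : Matrix n n ℝ) (star hB.eigenvectorUnitary : Matrix κ κ ℝ)) := by
    conv_lhs => rw [hA.spectral_theorem, hB.spectral_theorem]
    rw [hofA, hofB]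
    rw [Unitary.conjStarAlgAut_apply, Unitary.conjStarAlgAut_apply]
    rw [Matrix.mul_kronecker_mul, Matrix.mul_kronecker_mul, Matrix.diagonal_kronecker_diagonal]
  have hinv : (Matrix.kroneckerMap (· * ·) (hA.eigenvectorUnitary : Matrix n n ℝ) (hB.eigenvectorUnitary : Matrix κ κ ℝ))
      * (Matrix.kroneckerMap (· * ·) (star hA.eigenvectorUnitary : Matrix n n ℝ) (star hB.eigenvectorUnitary : Matrix κ κ ℝ)) = 1 := by
    rw [← Matrix.mul_kronecker_mul, hu1, hu2, Matrix.one_kronecker_one]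
  rw [hsp, myCharpoly_conj _ _ _ hinv, myCharpoly_diagonal]

lemma matEnergy_kronecker {n κ : Type} [Fintype n] [DecidableEq n] [Fintype κ] [DecidableEq κ]
    (A : Matrix n n ℝ) (B : Matrix κ κ ℝ) (hA : A.IsHermitian) (hB : B.IsHermitian) :
    matEnergy (Matrix.kroneckerMap (· * ·) A B) = matEnergy A * matEnergy B := by
  have hAB := isHermitian_kronecker A B hA hB
  rw [matEnergy, dif_pos hAB, matEnergy, dif_pos hA, matEnergy, dif_pos hB]
  rw [sum_abs_eigenvalues_eq _ hAB (fun p : n × κ => hA.eigenvalues p.1 * hB.eigenvalues p.2)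
    (charpoly_kronecker_herm A B hA hB)]
  rw [Finset.sum_mul_sum]
  rw [Fintype.sum_prod_type]
  congr 1; funext i; congr 1; funext k
  exact abs_mul _ _

end AuxSpectral


namespace StmtAux

variable (m : ℕ)

def um : Fin m → ℝ := fun k => if k.val = m - 1 then 1 else 0
def onev : Fin m → ℝ := fun _ => 1
def Jm : Matrix (Fin m) (Fin m) ℝ := vecMulVec (onev m) (onev m)
def Em : Matrix (Fin m) (Fin m) ℝ := vecMulVec (um m) (um m)
def Fm : Matrix (Fin m) (Fin m) ℝ := vecMulVec (onev m) (um m)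
def Gm : Matrix (Fin m) (Fin m) ℝ := vecMulVec (um m) (onev m)
def Pm : Matrix (Fin m) (Fin m) ℝ := Matrix.of fun i j =>
  if (i.val = 0 ∧ j.val = 0) ∨ (i.val ≠ 0 ∧ j.val ≠ 0 ∧ i.val + j.val = m - 1) then 1 else 0

/-- the "partner" of an index under the involution -/
def tau (i : Fin m) : Fin m := ⟨if i.val = 0 then 0 else m - 1 - i.val, by
  rcases i with ⟨v, hv⟩; dsimp; split <;> omega⟩

variable {m}

def lastF (hm : 3 < m) : Fin m := ⟨m - 1, by omega⟩

lemma val_eq_last_iff (hm : 3 < m) (k : Fin m) : k.val = m - 1 ↔ k = lastF hm := by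
  rw [Fin.ext_iff]; rfl

lemma tau_val (i : Fin m) : (tau m i).val = if i.val = 0 then 0 else m - 1 - i.val := rfl

lemma Pm_apply' (hm : 3 < m) (i j : Fin m) :
    Pm m i j = if i.val ≠ m - 1 ∧ j = tau m i then 1 else 0 := by
  have hi := i.isLt; have hj := j.isLt
  unfold Pm
  rw [Matrix.of_apply]
  congr 1
  rw [eq_iff_iff]
  simp only [Fin.ext_iff, tau_val]
  by_cases h0 : i.val = 0
  · rw [if_pos h0]; omega
  · rw [if_neg h0]; omega

lemma Pm_symm (hm : 3 < m) (i j : Fin m) : Pm m i j = Pm m j i := by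
  unfold Pm
  rw [Matrix.of_apply, Matrix.of_apply]
  congr 1
  rw [eq_iff_iff]
  constructor <;> intro h <;> omega

lemma tau_val_ne (hm : 3 < m) (i : Fin m) : (tau m i).val ≠ m - 1 := by
  have := i.isLt; rw [tau_val]; split <;> omega

lemma tau_tau (hm : 3 < m) (i : Fin m) (hi : i.val ≠ m - 1) : tau m (tau m i) = i := by
  have := i.isLt
  rw [Fin.ext_iff]
  simp only [tau_val]
  split <;> split <;> omega

lemma Pm_row (hm : 3 < m) (i : Fin m) (f : Fin m → ℝ) :
    ∑ k, Pm m i k * f k = if i.val ≠ m - 1 then f (tau m i) else 0 := by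
  by_cases hi : i.val = m - 1
  · simp [Pm_apply' hm, hi]
  · simp [Pm_apply' hm, hi, Finset.sum_ite_eq']

lemma Pm_col (hm : 3 < m) (j : Fin m) (f : Fin m → ℝ) :
    ∑ k, f k * Pm m k j = if j.val ≠ m - 1 then f (tau m j) else 0 := by
  rw [Finset.sum_congr rfl (fun k _ => by rw [Pm_symm hm, mul_comm])]
  exact Pm_row hm j f

lemma sum_last (hm : 3 < m) (f : Fin m → ℝ) :
    (∑ k : Fin m, if k.val = m - 1 then f k else 0) = f (lastF hm) := by
  rw [Finset.sum_congr rfl (fun k _ => by rw [if_congr (val_eq_last_iff hm k) rfl rfl])]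
  simp [Finset.sum_ite_eq']

lemma lastF_val (hm : 3 < m) : (lastF hm).val = m - 1 := rfl

lemma um_tau (hm : 3 < m) (i : Fin m) : um m (tau m i) = 0 := by
  unfold um; rw [if_neg (tau_val_ne hm i)]

-- rank-one product formula
lemma vmv_mul (a b c d : Fin m → ℝ) :
    vecMulVec a b * vecMulVec c d = (b ⬝ᵥ c) • vecMulVec a d := by
  ext i j
  simp only [Matrix.mul_apply, vecMulVec_apply, Matrix.smul_apply, dotProduct,
    Finset.sum_mul, smul_eq_mul]
  exact Finset.sum_congr rfl fun k _ => by ring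

lemma dot_uu (hm : 3 < m) : um m ⬝ᵥ um m = 1 := by
  unfold dotProduct
  rw [Finset.sum_congr rfl (fun k _ => show um m k * um m k = if k.val = m - 1 then (1:ℝ) else 0
    from by unfold um; split <;> simp)]
  rw [sum_last hm]

lemma dot_u1 (hm : 3 < m) : um m ⬝ᵥ onev m = 1 := by
  unfold dotProduct
  rw [Finset.sum_congr rfl (fun k _ => show um m k * onev m k = if k.val = m - 1 then (1:ℝ) else 0
    from by unfold um onev; split <;> simp)]
  rw [sum_last hm]

lemma dot_1u (hm : 3 < m) : onev m ⬝ᵥ um m = 1 := by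
  unfold dotProduct
  rw [Finset.sum_congr rfl (fun k _ => show onev m k * um m k = if k.val = m - 1 then (1:ℝ) else 0
    from by unfold um onev; split <;> simp)]
  rw [sum_last hm]

lemma dot_11 : onev m ⬝ᵥ onev m = (m : ℝ) := by
  unfold dotProduct onev; simp

-- the sixteen products not involving Pm
lemma hJJ (hm : 3 < m) : Jm m * Jm m = (m : ℝ) • Jm m := by
  rw [Jm, vmv_mul, dot_11]
lemma hJE (hm : 3 < m) : Jm m * Em m = Fm m := by
  rw [Jm, Em, Fm, vmv_mul, dot_1u hm, one_smul]
lemma hEJ (hm : 3 < m) : Em m * Jm m = Gm m := by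
  rw [Jm, Em, Gm, vmv_mul, dot_u1 hm, one_smul]
lemma hJF (hm : 3 < m) : Jm m * Fm m = (m : ℝ) • Fm m := by
  rw [Jm, Fm, vmv_mul, dot_11]
lemma hFJ (hm : 3 < m) : Fm m * Jm m = Jm m := by
  rw [Jm, Fm, vmv_mul, dot_u1 hm, one_smul]
lemma hJG (hm : 3 < m) : Jm m * Gm m = Jm m := by
  rw [Jm, Gm, vmv_mul, dot_1u hm, one_smul]
lemma hGJ (hm : 3 < m) : Gm m * Jm m = (m : ℝ) • Gm m := by
  rw [Jm, Gm, vmv_mul, dot_11]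
lemma hEE (hm : 3 < m) : Em m * Em m = Em m := by
  rw [Em, vmv_mul, dot_uu hm, one_smul]
lemma hEF (hm : 3 < m) : Em m * Fm m = Em m := by
  rw [Em, Fm, vmv_mul, dot_u1 hm, one_smul]
lemma hFE (hm : 3 < m) : Fm m * Em m = Fm m := by
  rw [Em, Fm, vmv_mul, dot_uu hm, one_smul]
lemma hEG (hm : 3 < m) : Em m * Gm m = Gm m := by
  rw [Em, Gm, vmv_mul, dot_uu hm, one_smul]
lemma hGE (hm : 3 < m) : Gm m * Em m = Em m := by
  rw [Em, Gm, vmv_mul, dot_1u hm, one_smul]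
lemma hFF (hm : 3 < m) : Fm m * Fm m = Fm m := by
  rw [Fm, vmv_mul, dot_u1 hm, one_smul]
lemma hFG (hm : 3 < m) : Fm m * Gm m = Jm m := by
  rw [Fm, Gm, Jm, vmv_mul, dot_uu hm, one_smul]
lemma hGF (hm : 3 < m) : Gm m * Fm m = (m : ℝ) • Em m := by
  rw [Fm, Gm, Em, vmv_mul, dot_11]
lemma hGG (hm : 3 < m) : Gm m * Gm m = Gm m := by
  rw [Gm, vmv_mul, dot_1u hm, one_smul]

-- products involving Pm
lemma hPP (hm : 3 < m) : Pm m * Pm m = 1 - Em m := by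
  ext i j
  rw [Matrix.mul_apply, Pm_row hm i (fun k => Pm m k j)]
  rw [Matrix.sub_apply, Matrix.one_apply]
  show _ = _ - vecMulVec (um m) (um m) i j
  rw [vecMulVec_apply]
  unfold um
  by_cases hi : i.val = m - 1
  · rw [if_neg (by simpa using hi)]
    by_cases hij : i = j
    · subst hij; rw [if_pos rfl, if_pos hi]; ring
    · rw [if_neg hij]
      rcases Decidable.em (j.val = m - 1) with hj | hj
      · exact absurd (Fin.ext (hi.trans hj.symm)) hij
      · rw [if_pos hi, if_neg hj]; ring
  · rw [if_pos (by simpa using hi)]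
    rw [Pm_apply' hm (tau m i) j]
    rw [if_neg hi]
    by_cases hij : i = j
    · subst hij
      rw [if_pos ⟨tau_val_ne hm i, (tau_tau hm i hi).symm⟩, if_pos rfl]
      ring
    · rw [if_neg hij, if_neg (fun h : ((tau m i).val ≠ m - 1 ∧ j = tau m (tau m i)) => by
        rw [tau_tau hm i hi] at h; exact hij h.2.symm)]
      ring

lemma Pm_mul_vmv (hm : 3 < m) (a b : Fin m → ℝ) :
    Pm m * vecMulVec a b = Matrix.of fun i j => (if i.val ≠ m - 1 then a (tau m i) else 0) * b j := by
  ext i j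
  rw [Matrix.mul_apply]
  rw [Finset.sum_congr rfl (fun k _ => show Pm m i k * vecMulVec a b k j
    = Pm m i k * (a k * b j) from by rw [vecMulVec_apply])]
  rw [show (∑ k, Pm m i k * (a k * b j)) = ∑ k, Pm m i k * (fun k => a k * b j) k from rfl]
  rw [Pm_row hm i]
  rw [Matrix.of_apply]
  split <;> simp

lemma vmv_mul_Pm (hm : 3 < m) (a b : Fin m → ℝ) :
    vecMulVec a b * Pm m = Matrix.of fun i j => a i * (if j.val ≠ m - 1 then b (tau m j) else 0) := by
  ext i j
  rw [Matrix.mul_apply]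
  rw [Finset.sum_congr rfl (fun k _ => show vecMulVec a b i k * Pm m k j
    = (a i * b k) * Pm m k j from by rw [vecMulVec_apply])]
  rw [show (∑ k, a i * b k * Pm m k j) = ∑ k, (fun k => a i * b k) k * Pm m k j from rfl]
  rw [Pm_col hm j]
  rw [Matrix.of_apply]
  split <;> simp

lemma hPJ (hm : 3 < m) : Pm m * Jm m = Jm m - Gm m := by
  rw [Jm, Pm_mul_vmv hm]
  ext i j
  rw [Matrix.of_apply, Matrix.sub_apply]
  show _ = vecMulVec (onev m) (onev m) i j - vecMulVec (um m) (onev m) i j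
  rw [vecMulVec_apply, vecMulVec_apply]
  unfold onev um
  by_cases hi : i.val = m - 1 <;> simp [hi]

lemma hJP (hm : 3 < m) : Jm m * Pm m = Jm m - Fm m := by
  rw [Jm, vmv_mul_Pm hm]
  ext i j
  rw [Matrix.of_apply, Matrix.sub_apply]
  show _ = vecMulVec (onev m) (onev m) i j - vecMulVec (onev m) (um m) i j
  rw [vecMulVec_apply, vecMulVec_apply]
  unfold onev um
  by_cases hj : j.val = m - 1 <;> simp [hj]

lemma hPE (hm : 3 < m) : Pm m * Em m = 0 := by
  rw [Em, Pm_mul_vmv hm]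
  ext i j
  rw [Matrix.of_apply, Matrix.zero_apply]
  rw [um_tau hm]
  split <;> ring

lemma hEP (hm : 3 < m) : Em m * Pm m = 0 := by
  rw [Em, vmv_mul_Pm hm]
  ext i j
  rw [Matrix.of_apply, Matrix.zero_apply]
  rw [um_tau hm]
  split <;> ring

lemma hPG (hm : 3 < m) : Pm m * Gm m = 0 := by
  rw [Gm, Pm_mul_vmv hm]
  ext i j
  rw [Matrix.of_apply, Matrix.zero_apply]
  rw [um_tau hm]
  split <;> ring

lemma hFP (hm : 3 < m) : Fm m * Pm m = 0 := by
  rw [Fm, vmv_mul_Pm hm]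
  ext i j
  rw [Matrix.of_apply, Matrix.zero_apply]
  rw [um_tau hm]
  split <;> ring

lemma hPF (hm : 3 < m) : Pm m * Fm m = Fm m - Em m := by
  rw [Fm, Pm_mul_vmv hm]
  ext i j
  rw [Matrix.of_apply, Matrix.sub_apply]
  show _ = vecMulVec (onev m) (um m) i j - vecMulVec (um m) (um m) i j
  rw [vecMulVec_apply, vecMulVec_apply]
  unfold onev um
  by_cases hi : i.val = m - 1 <;> simp [hi]

lemma hGP (hm : 3 < m) : Gm m * Pm m = Gm m - Em m := by
  rw [Gm, vmv_mul_Pm hm]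
  ext i j
  rw [Matrix.of_apply, Matrix.sub_apply]
  show _ = vecMulVec (um m) (onev m) i j - vecMulVec (um m) (um m) i j
  rw [vecMulVec_apply, vecMulVec_apply]
  unfold onev um
  by_cases hj : j.val = m - 1 <;> simp [hj]

variable (m)

def Km : Matrix (Fin m) (Fin m) ℝ := (m : ℝ) • Jm m - (m : ℝ) • Pm m - Fm m

def Qm : Matrix (Fin m) (Fin m) ℝ :=
  ((m : ℝ)^2) • 1 + ((m : ℝ)^3 - 2*(m : ℝ)^2 - (m : ℝ)) • Jm m - ((m : ℝ)^2 + (m : ℝ)) • Em m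
    + ((m : ℝ) + 1) • Fm m + ((m : ℝ)^2) • Gm m

def Q2m : Matrix (Fin m) (Fin m) ℝ :=
  ((m : ℝ)^4) • 1
  + ((m:ℝ)^7 - 4*(m:ℝ)^6 + 5*(m:ℝ)^5 - (m:ℝ)^4 - 2*(m:ℝ)^3 - 2*(m:ℝ)^2 - (m:ℝ)) • Jm m
  - ((m:ℝ)^4 + (m:ℝ)^3 + (m:ℝ)^2 + (m:ℝ)) • Em m
  + ((m:ℝ)^3 + (m:ℝ)^2 + (m:ℝ) + 1) • Fm m
  + ((m:ℝ)^6 - 3*(m:ℝ)^5 + 2*(m:ℝ)^4 + 2*(m:ℝ)^3 + (m:ℝ)^2) • Gm m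

variable {m}

lemma hKK (hm : 3 < m) : Km m * Km m = Qm m := by
  unfold Km Qm
  simp only [sub_mul, mul_sub, smul_mul_assoc, mul_smul_comm,
    hJJ hm, hJP hm, hJF hm, hPJ hm, hPP hm, hPF hm, hFJ hm, hFP hm, hFF hm]
  module

lemma hQQ (hm : 3 < m) : Qm m * Qm m = Q2m m := by
  unfold Qm Q2m
  simp only [add_mul, mul_add, sub_mul, mul_sub, smul_mul_assoc, mul_smul_comm,
    mul_one, one_mul,
    hJJ hm, hJE hm, hJF hm, hJG hm, hEJ hm, hEE hm, hEF hm, hEG hm,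
    hFJ hm, hFE hm, hFF hm, hFG hm, hGJ hm, hGE hm, hGF hm, hGG hm]
  module

lemma hQann (hm : 3 < m) :
    (Qm m - ((m:ℝ)^2 * ((m:ℝ) - 1)^2) • 1) * ((Qm m - 1) * (Qm m - ((m:ℝ)^2) • 1)) = 0 := by
  have hA : (Qm m - 1) * (Qm m - ((m:ℝ)^2) • 1)
      = Q2m m - (1 + (m:ℝ)^2) • Qm m + ((m:ℝ)^2) • 1 := by
    simp only [sub_mul, mul_sub, mul_one, one_mul, mul_smul_comm, hQQ hm]
    module
  rw [hA]
  have hQ1 : Qm m * (1 : Matrix (Fin m) (Fin m) ℝ) = Qm m := mul_one _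
  have hQQm := hQQ hm
  simp only [sub_mul, mul_sub, mul_add, add_mul, mul_one, one_mul, smul_mul_assoc,
    mul_smul_comm, hQQm]
  unfold Q2m Qm
  simp only [add_mul, mul_add, sub_mul, mul_sub, smul_mul_assoc, mul_smul_comm,
    mul_one, one_mul,
    hJJ hm, hJE hm, hJF hm, hJG hm, hEJ hm, hEE hm, hEF hm, hEG hm,
    hFJ hm, hFE hm, hFF hm, hFG hm, hGJ hm, hGE hm, hGF hm, hGG hm]
  match_scalars <;> ring

lemma trace_Jm (hm : 3 < m) : Matrix.trace (Jm m) = (m : ℝ) := by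
  unfold Jm Matrix.trace
  simp [Matrix.diag, vecMulVec_apply, onev]

lemma trace_Em (hm : 3 < m) : Matrix.trace (Em m) = 1 := by
  unfold Em Matrix.trace
  show (∑ i, vecMulVec (um m) (um m) i i) = 1
  rw [Finset.sum_congr rfl (fun k _ => show vecMulVec (um m) (um m) k k
    = if k.val = m - 1 then (1:ℝ) else 0 from by rw [vecMulVec_apply]; unfold um; split <;> simp)]
  rw [sum_last hm]

lemma trace_Fm (hm : 3 < m) : Matrix.trace (Fm m) = 1 := by
  unfold Fm Matrix.trace
  show (∑ i, vecMulVec (onev m) (um m) i i) = 1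
  rw [Finset.sum_congr rfl (fun k _ => show vecMulVec (onev m) (um m) k k
    = if k.val = m - 1 then (1:ℝ) else 0 from by rw [vecMulVec_apply]; unfold um onev; split <;> simp)]
  rw [sum_last hm]

lemma trace_Gm (hm : 3 < m) : Matrix.trace (Gm m) = 1 := by
  unfold Gm Matrix.trace
  show (∑ i, vecMulVec (um m) (onev m) i i) = 1
  rw [Finset.sum_congr rfl (fun k _ => show vecMulVec (um m) (onev m) k k
    = if k.val = m - 1 then (1:ℝ) else 0 from by rw [vecMulVec_apply]; unfold um onev; split <;> simp)]
  rw [sum_last hm]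

lemma trace_oneM : Matrix.trace (1 : Matrix (Fin m) (Fin m) ℝ) = (m : ℝ) := by
  rw [Matrix.trace_one]; simp

lemma trace_Qm (hm : 3 < m) :
    Matrix.trace (Qm m) = (m:ℝ)^4 - (m:ℝ)^3 - (m:ℝ)^2 + 1 := by
  unfold Qm
  rw [Matrix.trace_add, Matrix.trace_add, Matrix.trace_sub, Matrix.trace_add,
    Matrix.trace_smul, Matrix.trace_smul, Matrix.trace_smul, Matrix.trace_smul,
    Matrix.trace_smul, trace_oneM, trace_Jm hm, trace_Em hm, trace_Fm hm, trace_Gm hm]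
  simp only [smul_eq_mul]
  ring

lemma trace_Q2m (hm : 3 < m) :
    Matrix.trace (Q2m m) = (m:ℝ)^8 - 4*(m:ℝ)^7 + 6*(m:ℝ)^6 - 3*(m:ℝ)^5 - (m:ℝ)^4 + 1 := by
  unfold Q2m
  rw [Matrix.trace_add, Matrix.trace_add, Matrix.trace_sub, Matrix.trace_add,
    Matrix.trace_smul, Matrix.trace_smul, Matrix.trace_smul, Matrix.trace_smul,
    Matrix.trace_smul, trace_oneM, trace_Jm hm, trace_Em hm, trace_Fm hm, trace_Gm hm]
  simp only [smul_eq_mul]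
  ring

-- ## The normalized matrix

def BmatA (m : ℕ) : Matrix (Fin m) (Fin m) ℝ :=
  fun i j =>
    if (i.val = 0 ∧ j.val = 0) ∨ (i.val ≠ 0 ∧ j.val ≠ 0 ∧ i.val + j.val = m - 1) then 0 else 1

def rdeg (m : ℕ) : Fin m → ℝ := fun i => if i.val = m - 1 then (m : ℝ) else (m : ℝ) - 1

def sqr (m : ℕ) : Fin m → ℝ := fun i => Real.sqrt (rdeg m i)

def Dhalf (m : ℕ) : Matrix (Fin m) (Fin m) ℝ := Matrix.diagonal (sqr m)
def Dhalfinv (m : ℕ) : Matrix (Fin m) (Fin m) ℝ := Matrix.diagonal (fun i => (sqr m i)⁻¹)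
def DinvM (m : ℕ) : Matrix (Fin m) (Fin m) ℝ := Matrix.diagonal (fun i => (rdeg m i)⁻¹)
def Bnorm (m : ℕ) : Matrix (Fin m) (Fin m) ℝ := Dhalfinv m * BmatA m * Dhalfinv m

lemma cast4 (hm : 3 < m) : (4 : ℝ) ≤ (m : ℝ) := by exact_mod_cast (by omega : 4 ≤ m)

lemma rdeg_pos (hm : 3 < m) (i : Fin m) : 0 < rdeg m i := by
  have := cast4 hm
  unfold rdeg; split <;> linarith

lemma sqr_pos (hm : 3 < m) (i : Fin m) : 0 < sqr m i := Real.sqrt_pos.2 (rdeg_pos hm i)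

lemma hDhDhi (hm : 3 < m) : Dhalf m * Dhalfinv m = 1 := by
  unfold Dhalf Dhalfinv
  rw [Matrix.diagonal_mul_diagonal]
  rw [show (fun i => sqr m i * (sqr m i)⁻¹) = fun _ => (1:ℝ) from
    funext fun i => mul_inv_cancel₀ (ne_of_gt (sqr_pos hm i))]
  exact Matrix.diagonal_one

lemma hDhiDh (hm : 3 < m) : Dhalfinv m * Dhalf m = 1 := by
  unfold Dhalf Dhalfinv
  rw [Matrix.diagonal_mul_diagonal]
  rw [show (fun i => (sqr m i)⁻¹ * sqr m i) = fun _ => (1:ℝ) from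
    funext fun i => inv_mul_cancel₀ (ne_of_gt (sqr_pos hm i))]
  exact Matrix.diagonal_one

lemma hDhiDhi (hm : 3 < m) : Dhalfinv m * Dhalfinv m = DinvM m := by
  unfold Dhalfinv DinvM
  rw [Matrix.diagonal_mul_diagonal]
  exact congrArg Matrix.diagonal (funext fun i => by
    rw [← mul_inv, show sqr m i * sqr m i = rdeg m i from Real.mul_self_sqrt (le_of_lt (rdeg_pos hm i))])

lemma hBJP (hm : 3 < m) : BmatA m = Jm m - Pm m := by
  ext i j
  rw [Matrix.sub_apply]
  show BmatA m i j = vecMulVec (onev m) (onev m) i j - Pm m i j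
  rw [vecMulVec_apply]
  unfold BmatA Pm onev
  rw [Matrix.of_apply]
  split <;> simp

lemma Pm_last_col (hm : 3 < m) (i : Fin m) (hj : (j : Fin m).val = m - 1) : Pm m i j = 0 := by
  rw [Pm_apply' hm]
  rw [if_neg]
  rintro ⟨-, rfl⟩
  exact tau_val_ne hm i hj

lemma hKsim (hm : 3 < m) : Km m = ((m : ℝ) * ((m : ℝ) - 1)) • (BmatA m * DinvM m) := by
  have h4 := cast4 hm
  ext i j
  rw [Matrix.smul_apply, show BmatA m * DinvM m = BmatA m * Matrix.diagonal (fun i => (rdeg m i)⁻¹) from rfl,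
    Matrix.mul_diagonal]
  unfold Km
  rw [Matrix.sub_apply, Matrix.sub_apply, Matrix.smul_apply, Matrix.smul_apply]
  rw [show Jm m i j = 1 from by unfold Jm onev; rw [vecMulVec_apply]; norm_num]
  have hBP : BmatA m i j = 1 - Pm m i j := by
    rw [hBJP hm, Matrix.sub_apply, show Jm m i j = 1 from by unfold Jm onev; rw [vecMulVec_apply]; norm_num]
  by_cases hj : j.val = m - 1
  · rw [show Fm m i j = 1 from by unfold Fm um onev; rw [vecMulVec_apply, if_pos hj]; norm_num]
    rw [Pm_last_col hm i hj, hBP, Pm_last_col hm i hj]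
    unfold rdeg
    rw [if_pos hj]
    have hm0 : (m:ℝ) ≠ 0 := by linarith
    simp only [smul_eq_mul]
    field_simp
    ring
  · rw [show Fm m i j = 0 from by unfold Fm um onev; rw [vecMulVec_apply, if_neg hj]; norm_num]
    rw [hBP]
    unfold rdeg
    rw [if_neg hj]
    have hm1 : (m:ℝ) - 1 ≠ 0 := by linarith
    simp only [smul_eq_mul]
    field_simp
    ring

lemma Bnorm_apply (m : ℕ) (i j : Fin m) :
    Bnorm m i j = (sqr m i)⁻¹ * BmatA m i j * (sqr m j)⁻¹ := by
  unfold Bnorm Dhalfinv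
  rw [Matrix.mul_diagonal, Matrix.diagonal_mul]

lemma BmatA_symm (m : ℕ) (i j : Fin m) : BmatA m i j = BmatA m j i := by
  unfold BmatA
  congr 1
  rw [eq_iff_iff]
  constructor <;> intro h <;> omega

lemma Bnorm_herm (m : ℕ) : (Bnorm m).IsHermitian := by
  apply Matrix.IsHermitian.ext
  intro i j
  rw [Bnorm_apply, Bnorm_apply, BmatA_symm]
  simp only [star_trivial]
  ring

lemma hBnorm_conj (hm : 3 < m) : BmatA m * DinvM m = Dhalf m * Bnorm m * Dhalfinv m := by
  unfold Bnorm
  rw [show Dhalf m * (Dhalfinv m * BmatA m * Dhalfinv m) * Dhalfinv m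
      = (Dhalf m * Dhalfinv m) * BmatA m * (Dhalfinv m * Dhalfinv m) from by
    simp only [Matrix.mul_assoc]]
  rw [hDhDhi hm, hDhiDhi hm, Matrix.one_mul]

lemma hQm_conj (hm : 3 < m) :
    Qm m = Dhalf m * ((((m:ℝ) * ((m:ℝ) - 1))^2) • (Bnorm m * Bnorm m)) * Dhalfinv m := by
  rw [← hKK hm, hKsim hm, hBnorm_conj hm]
  rw [Matrix.smul_mul, Matrix.mul_smul, smul_smul, ← sq]
  congr 1
  rw [show Dhalf m * Bnorm m * Dhalfinv m * (Dhalf m * Bnorm m * Dhalfinv m)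
      = Dhalf m * (Bnorm m * (Dhalfinv m * Dhalf m) * Bnorm m) * Dhalfinv m from by
    simp only [Matrix.mul_assoc]]
  rw [hDhiDh hm, Matrix.mul_one]
  rw [Matrix.mul_smul, Matrix.smul_mul]

lemma hSann (hm : 3 < m) :
    ((((m:ℝ) * ((m:ℝ) - 1))^2) • (Bnorm m * Bnorm m) - ((m:ℝ)^2 * ((m:ℝ) - 1)^2) • 1) *
    (((((m:ℝ) * ((m:ℝ) - 1))^2) • (Bnorm m * Bnorm m) - 1) *
     ((((m:ℝ) * ((m:ℝ) - 1))^2) • (Bnorm m * Bnorm m) - ((m:ℝ)^2) • 1)) = 0 := by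
  set S2 := (((m:ℝ) * ((m:ℝ) - 1))^2) • (Bnorm m * Bnorm m) with hS2
  have hconj : ∀ (c : ℝ), Qm m - c • 1 = Dhalf m * (S2 - c • 1) * Dhalfinv m := by
    intro c
    rw [Matrix.mul_sub, Matrix.sub_mul, ← hQm_conj hm]
    congr 1
    rw [Matrix.mul_smul, Matrix.smul_mul, Matrix.mul_one, hDhDhi hm]
  have hconj1 : Qm m - (1:Matrix (Fin m) (Fin m) ℝ) = Dhalf m * (S2 - 1) * Dhalfinv m := by
    have := hconj 1
    rwa [one_smul] at this
  have hmul : ∀ (X Y : Matrix (Fin m) (Fin m) ℝ),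
      (Dhalf m * X * Dhalfinv m) * (Dhalf m * Y * Dhalfinv m) = Dhalf m * (X * Y) * Dhalfinv m := by
    intro X Y
    rw [show Dhalf m * X * Dhalfinv m * (Dhalf m * Y * Dhalfinv m)
        = Dhalf m * (X * (Dhalfinv m * Dhalf m) * Y) * Dhalfinv m from by
      simp only [Matrix.mul_assoc]]
    rw [hDhiDh hm, Matrix.mul_one]
  have hann := hQann hm
  rw [hconj ((m:ℝ)^2 * ((m:ℝ) - 1)^2), hconj1, hconj ((m:ℝ)^2), hmul, hmul] at hann
  have : Dhalfinv m * (Dhalf m *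
      ((S2 - ((m:ℝ)^2 * ((m:ℝ) - 1)^2) • 1) * ((S2 - 1) * (S2 - ((m:ℝ)^2) • 1))) * Dhalfinv m)
      * Dhalf m = Dhalfinv m * 0 * Dhalf m := by rw [hann]
  rw [Matrix.mul_zero, Matrix.zero_mul] at this
  rw [show Dhalfinv m * (Dhalf m *
      ((S2 - ((m:ℝ)^2 * ((m:ℝ) - 1)^2) • 1) * ((S2 - 1) * (S2 - ((m:ℝ)^2) • 1))) * Dhalfinv m)
      * Dhalf m = (Dhalfinv m * Dhalf m) *
      ((S2 - ((m:ℝ)^2 * ((m:ℝ) - 1)^2) • 1) * ((S2 - 1) * (S2 - ((m:ℝ)^2) • 1))) *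
      (Dhalfinv m * Dhalf m) from by simp only [Matrix.mul_assoc]] at this
  rwa [hDhiDh hm, Matrix.one_mul, Matrix.mul_one] at this

-- eigenvalue confinement
lemma eig_sq (hm : 3 < m) (i : Fin m) :
    ((Bnorm_herm m).eigenvalues i)^2 = 1 ∨
    ((Bnorm_herm m).eigenvalues i)^2 = (((m:ℝ) * ((m:ℝ) - 1))⁻¹)^2 ∨
    ((Bnorm_herm m).eigenvalues i)^2 = ((((m:ℝ) - 1))⁻¹)^2 := by
  have h4 := cast4 hm
  have hm0 : (m:ℝ) ≠ 0 := by linarith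
  have hm1 : (m:ℝ) - 1 ≠ 0 := by linarith
  have hs : (m:ℝ) * ((m:ℝ) - 1) ≠ 0 := mul_ne_zero hm0 hm1
  set hH := Bnorm_herm m
  set μ := hH.eigenvalues i with hμ
  set v : Fin m → ℝ := ⇑(hH.eigenvectorBasis i) with hvdef
  have hv : Bnorm m *ᵥ v = μ • v := hH.mulVec_eigenvectorBasis i
  have hvne : v ≠ 0 := by
    intro h
    have h1 := hH.eigenvectorBasis.orthonormal.1 i
    have : ‖hH.eigenvectorBasis i‖ = 0 := by
      rw [show hH.eigenvectorBasis i = 0 from by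
        apply PiLp.ext; intro x; exact congrFun h x]
      simp
    rw [this] at h1; norm_num at h1
  have hSv : (Bnorm m * Bnorm m) *ᵥ v = (μ^2) • v := by
    rw [← Matrix.mulVec_mulVec, hv, Matrix.mulVec_smul, hv, smul_smul, sq]
  set s2 : ℝ := ((m:ℝ) * ((m:ℝ) - 1))^2 with hs2def
  have key : ∀ (β : ℝ),
      (s2 • (Bnorm m * Bnorm m) - β • 1) *ᵥ v = (s2 * μ^2 - β) • v := by
    intro β
    rw [Matrix.sub_mulVec, Matrix.smul_mulVec, hSv, Matrix.smul_mulVec,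
      Matrix.one_mulVec, smul_smul, sub_smul]
  have key1 : (s2 • (Bnorm m * Bnorm m) - 1) *ᵥ v = (s2 * μ^2 - 1) • v := by
    have := key 1
    rwa [one_smul] at this
  have h0 := congrArg (fun M => M *ᵥ v) (hSann hm)
  simp only [Matrix.zero_mulVec] at h0
  rw [← Matrix.mulVec_mulVec, ← Matrix.mulVec_mulVec] at h0
  rw [key ((m:ℝ)^2), Matrix.mulVec_smul, key1, Matrix.mulVec_smul, Matrix.mulVec_smul,
    key ((m:ℝ)^2 * ((m:ℝ) - 1)^2), smul_smul, smul_smul] at h0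
  have hscal : (s2 * μ^2 - (m:ℝ)^2) * ((s2 * μ^2 - 1) * (s2 * μ^2 - (m:ℝ)^2 * ((m:ℝ)-1)^2)) = 0 := by
    rcases smul_eq_zero.mp h0 with h | h
    · linarith [h]
    · exact absurd h hvne
  have hs2ne : s2 ≠ 0 := pow_ne_zero 2 hs
  rcases mul_eq_zero.mp hscal with h | h
  · right; right
    have ht : μ^2 = (m:ℝ)^2 / s2 := by
      rw [eq_div_iff hs2ne]; linarith
    rw [ht, hs2def]
    field_simp
  · rcases mul_eq_zero.mp h with h | h
    · right; left
      have ht : μ^2 = 1 / s2 := by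
        rw [eq_div_iff hs2ne]; linarith
      rw [ht, hs2def]
      field_simp
    · left
      have ht : μ^2 = ((m:ℝ)^2 * ((m:ℝ)-1)^2) / s2 := by
        rw [eq_div_iff hs2ne]; linarith
      rw [ht, hs2def]
      field_simp

-- ## traces and eigenvalue power sums

lemma trace_conj_diag {n : Type} [Fintype n] [DecidableEq n]
    (V : Matrix n n ℝ) (hV : star V * V = 1) (X : Matrix n n ℝ) :
    Matrix.trace (V * X * star V) = Matrix.trace X := by
  rw [Matrix.trace_mul_comm (V * X) (star V), ← Matrix.mul_assoc, hV, Matrix.one_mul]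

lemma herm_decomp {n : Type} [Fintype n] [DecidableEq n]
    (M : Matrix n n ℝ) (hM : M.IsHermitian) :
    M = (hM.eigenvectorUnitary : Matrix n n ℝ) * Matrix.diagonal hM.eigenvalues *
        (star hM.eigenvectorUnitary : Matrix n n ℝ) := by
  have h := hM.spectral_theorem
  rwa [show (RCLike.ofReal ∘ hM.eigenvalues : n → ℝ) = hM.eigenvalues from
    funext fun i => by simp [RCLike.ofReal]] at h

lemma trace_sq_eq {n : Type} [Fintype n] [DecidableEq n]
    (M : Matrix n n ℝ) (hM : M.IsHermitian) :
    Matrix.trace (M * M) = ∑ i, (hM.eigenvalues i)^2 := by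
  set V : Matrix n n ℝ := (hM.eigenvectorUnitary : Matrix n n ℝ) with hVdef
  have hV : star V * V = 1 := Matrix.mem_unitaryGroup_iff'.mp hM.eigenvectorUnitary.2
  have hMM : M * M = V * (Matrix.diagonal hM.eigenvalues * Matrix.diagonal hM.eigenvalues) * star V := by
    conv_lhs => rw [herm_decomp M hM]
    rw [show V * Matrix.diagonal hM.eigenvalues * star V * (V * Matrix.diagonal hM.eigenvalues * star V)
        = V * (Matrix.diagonal hM.eigenvalues * (star V * V) * Matrix.diagonal hM.eigenvalues) * star V
      from by simp only [Matrix.mul_assoc], hV, Matrix.mul_one]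
  rw [hMM, trace_conj_diag V hV, Matrix.diagonal_mul_diagonal, Matrix.trace_diagonal]
  exact Finset.sum_congr rfl fun i _ => (sq _).symm

lemma trace_quad_eq {n : Type} [Fintype n] [DecidableEq n]
    (M : Matrix n n ℝ) (hM : M.IsHermitian) :
    Matrix.trace ((M * M) * (M * M)) = ∑ i, (hM.eigenvalues i)^4 := by
  set V : Matrix n n ℝ := (hM.eigenvectorUnitary : Matrix n n ℝ) with hVdef
  have hV : star V * V = 1 := Matrix.mem_unitaryGroup_iff'.mp hM.eigenvectorUnitary.2
  have hMM : M * M = V * (Matrix.diagonal hM.eigenvalues * Matrix.diagonal hM.eigenvalues) * star V := by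
    conv_lhs => rw [herm_decomp M hM]
    rw [show V * Matrix.diagonal hM.eigenvalues * star V * (V * Matrix.diagonal hM.eigenvalues * star V)
        = V * (Matrix.diagonal hM.eigenvalues * (star V * V) * Matrix.diagonal hM.eigenvalues) * star V
      from by simp only [Matrix.mul_assoc], hV, Matrix.mul_one]
  set D2 := Matrix.diagonal hM.eigenvalues * Matrix.diagonal hM.eigenvalues with hD2
  have hM4 : (M * M) * (M * M) = V * (D2 * D2) * star V := by
    rw [hMM]
    rw [show V * D2 * star V * (V * D2 * star V)
        = V * (D2 * (star V * V) * D2) * star V from by simp only [Matrix.mul_assoc], hV, Matrix.mul_one]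
  rw [hM4, trace_conj_diag V hV, hD2, Matrix.diagonal_mul_diagonal, Matrix.diagonal_mul_diagonal,
    Matrix.trace_diagonal]
  exact Finset.sum_congr rfl fun i _ => by ring

lemma trace_S_val (hm : 3 < m) :
    Matrix.trace (Bnorm m * Bnorm m)
      = ((m:ℝ)^4 - (m:ℝ)^3 - (m:ℝ)^2 + 1) / (((m:ℝ) * ((m:ℝ) - 1))^2) := by
  have h4 := cast4 hm
  have hs2ne : (((m:ℝ) * ((m:ℝ) - 1))^2) ≠ 0 := by
    apply pow_ne_zero; apply mul_ne_zero <;> intro h <;> nlinarith [h]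
  have h1 : Matrix.trace (Qm m) = (((m:ℝ) * ((m:ℝ) - 1))^2) * Matrix.trace (Bnorm m * Bnorm m) := by
    rw [hQm_conj hm]
    rw [Matrix.trace_mul_comm (Dhalf m * ((((m:ℝ) * ((m:ℝ) - 1))^2) • (Bnorm m * Bnorm m))) (Dhalfinv m)]
    rw [← Matrix.mul_assoc, hDhiDh hm, Matrix.one_mul, Matrix.trace_smul, smul_eq_mul]
  rw [eq_div_iff hs2ne, mul_comm]
  rw [← h1, trace_Qm hm]

lemma trace_SS_val (hm : 3 < m) :
    Matrix.trace ((Bnorm m * Bnorm m) * (Bnorm m * Bnorm m))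
      = ((m:ℝ)^8 - 4*(m:ℝ)^7 + 6*(m:ℝ)^6 - 3*(m:ℝ)^5 - (m:ℝ)^4 + 1) / ((((m:ℝ) * ((m:ℝ) - 1))^2)^2) := by
  have h4 := cast4 hm
  have hs2ne : (((m:ℝ) * ((m:ℝ) - 1))^2) ≠ 0 := by
    apply pow_ne_zero; apply mul_ne_zero <;> intro h <;> nlinarith [h]
  set s2 : ℝ := ((m:ℝ) * ((m:ℝ) - 1))^2 with hs2def
  set S := Bnorm m * Bnorm m with hSdef
  have hmul : Qm m * Qm m = Dhalf m * ((s2 • S) * (s2 • S)) * Dhalfinv m := by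
    rw [hQm_conj hm]
    rw [show Dhalf m * (s2 • S) * Dhalfinv m * (Dhalf m * (s2 • S) * Dhalfinv m)
        = Dhalf m * ((s2 • S) * (Dhalfinv m * Dhalf m) * (s2 • S)) * Dhalfinv m
      from by simp only [Matrix.mul_assoc], hDhiDh hm, Matrix.mul_one]
  have h1 : Matrix.trace (Qm m * Qm m) = (s2^2) * Matrix.trace (S * S) := by
    rw [hmul]
    rw [Matrix.trace_mul_comm (Dhalf m * ((s2 • S) * (s2 • S))) (Dhalfinv m)]
    rw [← Matrix.mul_assoc, hDhiDh hm, Matrix.one_mul]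
    rw [Matrix.smul_mul, Matrix.mul_smul, Matrix.trace_smul, Matrix.trace_smul]
    simp only [smul_eq_mul]
    ring
  rw [eq_div_iff (pow_ne_zero 2 hs2ne), mul_comm]
  rw [← h1, hQQ hm, trace_Q2m hm]

lemma energy_Bnorm (hm : 3 < m) :
    ∑ i, |(Bnorm_herm m).eigenvalues i| = (2*(m:ℝ) - 1)/(m:ℝ) := by
  have h4 := cast4 hm
  have hm0 : (m:ℝ) ≠ 0 := by linarith
  have hm1 : (m:ℝ) - 1 ≠ 0 := by linarith
  have hden1 : (m:ℝ)^3 + 1 ≠ 0 := by positivity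
  have hden2 : (m:ℝ)^4 + (m:ℝ) ≠ 0 := by positivity
  set d0 : ℝ := ((m:ℝ)^2 + 1)/((m:ℝ)^4 + (m:ℝ)) with hd0
  set d1 : ℝ := ((m:ℝ)^5 - 2*(m:ℝ)^4 + 3*(m:ℝ)^3 - 2*(m:ℝ)^2 + (m:ℝ) - 1)/((m:ℝ)^4 + (m:ℝ)) with hd1
  set d2 : ℝ := ((m:ℝ) - 3*(m:ℝ)^2 + 3*(m:ℝ)^3 - (m:ℝ)^4)/((m:ℝ)^3 + 1) with hd2
  have hpt : ∀ i, |(Bnorm_herm m).eigenvalues i|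
      = d0 + d1 * ((Bnorm_herm m).eigenvalues i)^2 + d2 * ((Bnorm_herm m).eigenvalues i)^4 := by
    intro i
    set μ := (Bnorm_herm m).eigenvalues i with hμ
    have habs : |μ| = Real.sqrt (μ^2) := (Real.sqrt_sq_eq_abs μ).symm
    have hμ4 : μ^4 = (μ^2)^2 := by ring
    rcases eig_sq hm i with h | h | h
    · rw [habs, h, Real.sqrt_one, hμ4, h]
      rw [hd0, hd1, hd2]
      field_simp
      ring
    · have hpos : (0:ℝ) ≤ (((m:ℝ) * ((m:ℝ) - 1))⁻¹) := by
        apply inv_nonneg.2; nlinarith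
      rw [habs, h, Real.sqrt_sq hpos, hμ4, h]
      rw [hd0, hd1, hd2]
      field_simp
      ring
    · have hpos : (0:ℝ) ≤ ((((m:ℝ) - 1))⁻¹) := by
        apply inv_nonneg.2; linarith
      rw [habs, h, Real.sqrt_sq hpos, hμ4, h]
      rw [hd0, hd1, hd2]
      field_simp
      ring
  rw [Finset.sum_congr rfl (fun i _ => hpt i)]
  rw [Finset.sum_add_distrib, Finset.sum_add_distrib, ← Finset.mul_sum, ← Finset.mul_sum,
    Finset.sum_const, Finset.card_univ, Fintype.card_fin, ← trace_sq_eq _ (Bnorm_herm m),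
    ← trace_quad_eq _ (Bnorm_herm m), trace_S_val hm, trace_SS_val hm]
  rw [nsmul_eq_mul, hd0, hd1, hd2]
  field_simp
  ring

end StmtAux


namespace StmtAux

lemma BmatA_eq (m : ℕ) : BmatA m = Bmat m := rfl

lemma Bmat_apply' (hm : 3 < m) (i j : Fin m) :
    Bmat m i j = if i.val ≠ m - 1 ∧ j = tau m i then 0 else 1 := by
  have hi := i.isLt; have hj := j.isLt
  unfold Bmat
  congr 1
  rw [eq_iff_iff]
  simp only [Fin.ext_iff, tau_val]
  by_cases h0 : i.val = 0
  · rw [if_pos h0]; omega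
  · rw [if_neg h0]; omega

lemma randic_herm {W : Type} (H : SimpleGraph W) : (randicMatrix H).IsHermitian := by
  apply Matrix.IsHermitian.ext
  intro i j
  simp only [star_trivial, randicMatrix]
  by_cases h : H.Adj j i
  · rw [if_pos h, if_pos h.symm, Nat.mul_comm]
  · rw [if_neg h, if_neg (fun h2 => h h2.symm)]

variable {V : Type} [Fintype V] [DecidableEq V]

lemma F1_neighborSet (m : ℕ) (G : SimpleGraph V) (i : Fin m) (u : V) :
    (F1Graph m G).neighborSet (i, u) = {j : Fin m | Bmat m i j = 1} ×ˢ (G.neighborSet u) := by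
  ext ⟨j, v⟩
  simp only [SimpleGraph.mem_neighborSet, Set.mem_prod, Set.mem_setOf_eq]
  rfl

lemma card_BmatRow (hm : 3 < m) (i : Fin m) :
    Nat.card {j : Fin m | Bmat m i j = 1} = if i.val = m - 1 then m else m - 1 := by
  by_cases hi : i.val = m - 1
  · rw [if_pos hi]
    have hset : {j : Fin m | Bmat m i j = 1} = Set.univ := by
      ext j
      simp only [Set.mem_setOf_eq, Set.mem_univ, iff_true]
      rw [Bmat_apply' hm, if_neg (by rintro ⟨h, -⟩; exact h hi)]
    rw [hset, Nat.card_coe_set_eq, Set.ncard_univ, Nat.card_eq_fintype_card, Fintype.card_fin]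
  · rw [if_neg hi]
    have hset : {j : Fin m | Bmat m i j = 1} = {tau m i}ᶜ := by
      ext j
      simp only [Set.mem_setOf_eq, Set.mem_compl_iff, Set.mem_singleton_iff]
      rw [Bmat_apply' hm]
      by_cases hj : j = tau m i
      · rw [if_pos ⟨hi, hj⟩]
        simp [hj]
      · rw [if_neg (by rintro ⟨-, h⟩; exact hj h)]
        simp [hj]
    rw [hset, Nat.card_coe_set_eq]
    have h2 := Set.ncard_add_ncard_compl ({tau m i} : Set (Fin m))
    rw [Set.ncard_singleton, Nat.card_eq_fintype_card, Fintype.card_fin] at h2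
    omega

lemma F1_card_nbhd (hm : 3 < m) (G : SimpleGraph V) (i : Fin m) (u : V) :
    Nat.card ((F1Graph m G).neighborSet (i, u))
      = (if i.val = m - 1 then m else m - 1) * Nat.card (G.neighborSet u) := by
  rw [F1_neighborSet]
  rw [Nat.card_congr (Equiv.Set.prod _ _), Nat.card_prod, card_BmatRow hm]

lemma cast_rdeg (hm : 3 < m) (i : Fin m) :
    (if i.val = m - 1 then ((m : ℕ) : ℝ) else ((m - 1 : ℕ) : ℝ)) = rdeg m i := by
  unfold rdeg
  split
  · rfl
  · rw [Nat.cast_sub (by omega)]; simp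

lemma deg_pos (G : SimpleGraph V) {u v : V} (h : G.Adj u v) :
    0 < Nat.card (G.neighborSet u) := by
  have hne : (G.neighborSet u).Nonempty := ⟨v, h⟩
  rw [Nat.card_coe_set_eq]
  exact (Set.ncard_pos (Set.toFinite _)).mpr hne

lemma randic_F1_eq (hm : 3 < m) (G : SimpleGraph V) :
    randicMatrix (F1Graph m G) = Matrix.kroneckerMap (· * ·) (Bnorm m) (randicMatrix G) := by
  have h4 := cast4 hm
  ext ⟨i, u⟩ ⟨j, v⟩
  rw [Matrix.kroneckerMap_apply]
  simp only [randicMatrix]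
  by_cases hadj : G.Adj u v
  · by_cases hB : Bmat m i j = 1
    · have hAdj : (F1Graph m G).Adj (i, u) (j, v) := ⟨hB, hadj⟩
      rw [if_pos hAdj, if_pos hadj]
      rw [F1_card_nbhd hm G i u, F1_card_nbhd hm G j v]
      rw [Bnorm_apply, BmatA_eq, hB, mul_one]
      have hdu : 0 < Nat.card (G.neighborSet u) := deg_pos G hadj
      have hdv : 0 < Nat.card (G.neighborSet v) := deg_pos G hadj.symm
      set du : ℝ := (Nat.card (G.neighborSet u) : ℝ) with hdu'
      set dv : ℝ := (Nat.card (G.neighborSet v) : ℝ) with hdv'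
      have hduR : 0 < du := by rw [hdu']; exact_mod_cast hdu
      have hdvR : 0 < dv := by rw [hdv']; exact_mod_cast hdv
      have hri : 0 < rdeg m i := rdeg_pos hm i
      have hrj : 0 < rdeg m j := rdeg_pos hm j
      push_cast
      rw [cast_rdeg hm i, cast_rdeg hm j]
      rw [show rdeg m i * du * (rdeg m j * dv) = (rdeg m i * rdeg m j) * (du * dv) by ring]
      rw [Real.sqrt_mul (by positivity) (du * dv),
        Real.sqrt_mul (le_of_lt hri) (rdeg m j)]
      have hsi : 0 < Real.sqrt (rdeg m i) := Real.sqrt_pos.2 hri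
      have hsj : 0 < Real.sqrt (rdeg m j) := Real.sqrt_pos.2 hrj
      have hsd : 0 < Real.sqrt (du * dv) := Real.sqrt_pos.2 (by positivity)
      unfold sqr
      field_simp
      rfl
    · have hB0 : Bmat m i j = 0 := by
        revert hB
        unfold Bmat
        split <;> intro hB
        · rfl
        · exact absurd rfl hB
      have hnAdj : ¬ (F1Graph m G).Adj (i, u) (j, v) := fun h => hB h.1
      rw [if_neg hnAdj, Bnorm_apply, BmatA_eq, hB0]
      ring
  · have hnAdj : ¬ (F1Graph m G).Adj (i, u) (j, v) := fun h => hadj h.2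
    rw [if_neg hnAdj, if_neg hadj]
    ring

end StmtAux


/-- `ε_R(F₁^m(G)) = ε_R(G) + ((m−1)/m)·ε_R(G) = ((2m−1)/m)·ε_R(G)` for `m > 3`. -/
theorem stmt_14 (m : ℕ) (hm : 3 < m)
    (V : Type) [Fintype V] [DecidableEq V] (G : SimpleGraph V) [DecidableRel G.Adj]
    (hiso : NoIsolated G) :
    matEnergy (randicMatrix (F1Graph m G)) =
        matEnergy (randicMatrix G) + (((m : ℝ) - 1) / (m : ℝ)) * matEnergy (randicMatrix G) ∧
    matEnergy (randicMatrix (F1Graph m G)) =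
        ((2 * (m : ℝ) - 1) / (m : ℝ)) * matEnergy (randicMatrix G) := by
  classical
  have h4 : (4:ℝ) ≤ (m:ℝ) := StmtAux.cast4 hm
  have hm0 : (m:ℝ) ≠ 0 := by linarith
  have hRh : (randicMatrix G).IsHermitian := StmtAux.randic_herm G
  have hkey : randicMatrix (F1Graph m G)
      = Matrix.kroneckerMap (· * ·) (StmtAux.Bnorm m) (randicMatrix G) :=
    StmtAux.randic_F1_eq hm G
  have hE : matEnergy (randicMatrix (F1Graph m G))
      = ((2 * (m:ℝ) - 1) / (m:ℝ)) * matEnergy (randicMatrix G) := by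
    rw [hkey, matEnergy_kronecker _ _ (StmtAux.Bnorm_herm m) hRh]
    congr 1
    rw [matEnergy, dif_pos (StmtAux.Bnorm_herm m)]
    exact StmtAux.energy_Bnorm hm
  have hsplit : (2 * (m:ℝ) - 1) / (m:ℝ) = 1 + ((m:ℝ) - 1) / (m:ℝ) := by
    field_simp
    ring
  constructor
  · rw [hE, hsplit]
    ring
  · exact hE

end
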